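/- Let 𝒜 be an incomplete pairwise comparison matrix on n alternatives with connected graph G = (V,E), and define κ(y) = (1/2) Σ_{i=1}^n Σ_{j ∈ N_i} (ln 𝒜_ij − y_i + y_j)² for y ∈ ℝⁿ. Then y* ∈ ℝⁿ is a global minimizer of κ over ℝⁿ if and only if Σ_{j ∈ N_i} (ln 𝒜_ij − y*_i + y*_j) = 0 for every i = 1,…,n; equivalently, if and only if L y* = P 1ₙ, where L is the graph Laplacian of G, P is the n×n matrix with P_ij = ln 𝒜_ij if {i,j} ∈ E and P_ij = 0 otherwise, and 1ₙ is the all-ones vector. -/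

import Mathlib

/-!
Writing `S(y)_i = Σ_{j ∈ N_i} (ln 𝒜_ij − y_i + y_j)`, reciprocity makes the residuals
`ln 𝒜_ij − y_i + y_j` antisymmetric in `(i, j)`, so summation by parts gives the exact expansion
`κ(y + d) = κ(y) − 2 ⟨d, S(y)⟩ + dᵀ L d` with `L` the graph Laplacian. Since `L` is positive
semidefinite, `S(y*) = 0` makes `y*` a minimizer; conversely, along `y* + t S(y*)` the quadratic
`t ↦ t² S(y*)ᵀ L S(y*) − 2t |S(y*)|²` must be nonnegative, forcing `|S(y*)|² = 0`.
Finally `S(y) = P 1ₙ − L y` entrywise.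
-/

noncomputable section

/-- The incomplete logarithmic least squares objective
`κ(y) = ½ Σ_i Σ_{j ∈ N_i} (ln 𝒜_ij − y_i + y_j)²`. -/
def kappaLLS {n : ℕ} (G : SimpleGraph (Fin n)) [DecidableRel G.Adj]
    (A : Fin n → Fin n → ℝ) (y : Fin n → ℝ) : ℝ :=
  (1 / 2) * ∑ i : Fin n, ∑ j : Fin n,
    if G.Adj i j then (Real.log (A i j) - y i + y j) ^ 2 else 0

/-- The graph Laplacian of `G`. -/
def lap {n : ℕ} (G : SimpleGraph (Fin n)) [DecidableRel G.Adj] :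
    Matrix (Fin n) (Fin n) ℝ :=
  Matrix.of fun i j =>
    if i = j then ((Finset.univ.filter fun k => G.Adj i k).card : ℝ)
    else if G.Adj i j then -1 else 0

/-- The matrix `P` with `P_ij = ln 𝒜_ij` on edges and `0` elsewhere. -/
def Pmat {n : ℕ} (G : SimpleGraph (Fin n)) [DecidableRel G.Adj]
    (A : Fin n → Fin n → ℝ) : Matrix (Fin n) (Fin n) ℝ :=
  Matrix.of fun i j => if G.Adj i j then Real.log (A i j) else 0

open Matrix

namespace SimpleGraph

variable {V R : Type*} [Fintype V] [CommRing R] (G : SimpleGraph V) [DecidableRel G.Adj]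

theorem sum_adj_mul_sub_of_antisymm {w : V → V → R} (hw : ∀ i j, G.Adj i j → w j i = -w i j)
    (d : V → R) :
    ∑ i, ∑ j, (if G.Adj i j then w i j * (d j - d i) else 0) =
      -2 * ∑ i, d i * ∑ j, if G.Adj i j then w i j else 0 := by
  have hswap : ∑ i, ∑ j, (if G.Adj i j then w i j * d j else 0) =
      -∑ i, ∑ j, (if G.Adj i j then w i j * d i else 0) := by
    rw [Finset.sum_comm, ← Finset.sum_neg_distrib]
    refine Finset.sum_congr rfl fun i _ => ?_
    rw [← Finset.sum_neg_distrib]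
    refine Finset.sum_congr rfl fun j _ => ?_
    by_cases h : G.Adj i j
    · simp [h, h.symm, hw i j h]
    · simp [h, G.adj_comm]
  have hsplit : ∀ i j, (if G.Adj i j then w i j * (d j - d i) else 0) =
      (if G.Adj i j then w i j * d j else 0) - (if G.Adj i j then w i j * d i else 0) := by
    intro i j
    split_ifs <;> ring
  calc ∑ i, ∑ j, (if G.Adj i j then w i j * (d j - d i) else 0)
      = ∑ i, ∑ j, (if G.Adj i j then w i j * d j else 0) -
          ∑ i, ∑ j, (if G.Adj i j then w i j * d i else 0) := by
        simp only [hsplit, Finset.sum_sub_distrib]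
    _ = -2 * ∑ i, ∑ j, (if G.Adj i j then w i j * d i else 0) := by rw [hswap]; ring
    _ = -2 * ∑ i, d i * ∑ j, if G.Adj i j then w i j else 0 := by
        congr 1
        refine Finset.sum_congr rfl fun i _ => ?_
        rw [Finset.mul_sum]
        refine Finset.sum_congr rfl fun j _ => ?_
        split_ifs <;> ring

end SimpleGraph

section Kappa

variable {n : ℕ} (G : SimpleGraph (Fin n)) [DecidableRel G.Adj] (A : Fin n → Fin n → ℝ)

/-- Minus half the gradient of `kappaLLS G A` at `y`. -/
def kappaResidual (y : Fin n → ℝ) (i : Fin n) : ℝ :=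
  ∑ j, if G.Adj i j then Real.log (A i j) - y i + y j else 0

theorem lap_eq_lapMatrix : lap G = G.lapMatrix ℝ := by
  ext i j
  by_cases h : i = j
  · subst h
    simp [lap, SimpleGraph.lapMatrix, SimpleGraph.degMatrix, SimpleGraph.degree,
      SimpleGraph.neighborFinset_eq_filter]
  · by_cases hij : G.Adj i j <;>
      simp [lap, SimpleGraph.lapMatrix, SimpleGraph.degMatrix, h, hij]

theorem kappaResidual_eq_sub (y : Fin n → ℝ) :
    kappaResidual G A y = Pmat G A *ᵥ (fun _ => 1) - G.lapMatrix ℝ *ᵥ y := by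
  ext i
  rw [Pi.sub_apply, SimpleGraph.lapMatrix_mulVec_apply, SimpleGraph.degree_eq_sum_if_adj,
    SimpleGraph.neighborFinset_eq_filter, Finset.sum_filter, Finset.sum_mul]
  simp only [kappaResidual, Pmat, mulVec, dotProduct, of_apply, mul_one, ← Finset.sum_sub_distrib]
  refine Finset.sum_congr rfl fun j _ => ?_
  split_ifs <;> ring

variable {G A}

theorem kappaLLS_add (hlog : ∀ i j, G.Adj i j → Real.log (A j i) = -Real.log (A i j))
    (y d : Fin n → ℝ) :
    kappaLLS G A (y + d) =
      kappaLLS G A y - 2 * (d ⬝ᵥ kappaResidual G A y) + d ⬝ᵥ (G.lapMatrix ℝ *ᵥ d) := by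
  have hcross := G.sum_adj_mul_sub_of_antisymm (w := fun i j => Real.log (A i j) - y i + y j)
    (fun i j h => by rw [hlog i j h]; ring) d
  have hterm : ∀ i j, (if G.Adj i j then (Real.log (A i j) - (y + d) i + (y + d) j) ^ 2 else 0) =
      (if G.Adj i j then (Real.log (A i j) - y i + y j) ^ 2 else 0) +
      2 * (if G.Adj i j then (Real.log (A i j) - y i + y j) * (d j - d i) else 0) +
      (if G.Adj i j then (d i - d j) ^ 2 else 0) := by
    intro i j
    simp only [Pi.add_apply]
    split_ifs <;> ring
  rw [← toLinearMap₂'_apply', SimpleGraph.lapMatrix_toLinearMap₂']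
  simp only [kappaLLS, hterm, Finset.sum_add_distrib, ← Finset.mul_sum, hcross, kappaResidual,
    dotProduct]
  ring

theorem forall_kappaLLS_le_iff (hlog : ∀ i j, G.Adj i j → Real.log (A j i) = -Real.log (A i j))
    (ystar : Fin n → ℝ) :
    (∀ y, kappaLLS G A ystar ≤ kappaLLS G A y) ↔ kappaResidual G A ystar = 0 := by
  constructor
  · intro hmin
    set S := kappaResidual G A ystar
    have hquad : ∀ t : ℝ,
        0 ≤ (S ⬝ᵥ (G.lapMatrix ℝ *ᵥ S)) * (t * t) + (-2 * (S ⬝ᵥ S)) * t + 0 := by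
      intro t
      have := hmin (ystar + t • S)
      rw [kappaLLS_add hlog] at this
      simp only [mulVec_smul, dotProduct_smul, smul_dotProduct, smul_eq_mul] at this
      linarith
    have hdisc := discrim_le_zero hquad
    rw [discrim] at hdisc
    exact dotProduct_self_eq_zero.mp (by nlinarith)
  · intro hS y
    have hexp := kappaLLS_add hlog ystar (y - ystar)
    rw [add_sub_cancel, hS, dotProduct_zero] at hexp
    have hpsd := (SimpleGraph.posSemidef_lapMatrix ℝ G).dotProduct_mulVec_nonneg (y - ystar)
    rw [star_trivial] at hpsd
    linarith

end Kappa

theorem kappa_global_min_iff_general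
    {n : ℕ} (G : SimpleGraph (Fin n)) [DecidableRel G.Adj]
    (A : Fin n → Fin n → ℝ)
    (hrec : ∀ i j, G.Adj i j → A j i = 1 / A i j)
    (ystar : Fin n → ℝ) :
    ((∀ y : Fin n → ℝ, kappaLLS G A ystar ≤ kappaLLS G A y) ↔
      ∀ i : Fin n,
        (∑ j : Fin n, if G.Adj i j then Real.log (A i j) - ystar i + ystar j else 0)
          = 0) ∧
    ((∀ y : Fin n → ℝ, kappaLLS G A ystar ≤ kappaLLS G A y) ↔
      (lap G).mulVec ystar = (Pmat G A).mulVec (fun _ => 1)) := by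
  have hlog : ∀ i j, G.Adj i j → Real.log (A j i) = -Real.log (A i j) := fun i j h => by
    rw [hrec i j h, one_div, Real.log_inv]
  have hmin := forall_kappaLLS_le_iff hlog ystar
  refine ⟨hmin.trans funext_iff, hmin.trans ?_⟩
  rw [kappaResidual_eq_sub, sub_eq_zero, lap_eq_lapMatrix, eq_comm]

/-- **First-order characterization of the ILLS minimizers.**
For an incomplete pairwise comparison matrix `𝒜` with connected graph `G`,
`y*` is a global minimizer of `κ` over `ℝⁿ` iff
`Σ_{j ∈ N_i} (ln 𝒜_ij − y*_i + y*_j) = 0` for every `i`, equivalently iff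
`L y* = P 1ₙ`. -/
theorem kappa_global_min_iff
    {n : ℕ} (G : SimpleGraph (Fin n)) [DecidableRel G.Adj] (hconn : G.Connected)
    (A : Fin n → Fin n → ℝ)
    (hpos : ∀ i j, G.Adj i j → 0 < A i j)
    (hrec : ∀ i j, G.Adj i j → A j i = 1 / A i j)
    (hzero : ∀ i j, ¬ G.Adj i j → A i j = 0)
    (ystar : Fin n → ℝ) :
    ((∀ y : Fin n → ℝ, kappaLLS G A ystar ≤ kappaLLS G A y) ↔
      ∀ i : Fin n,
        (∑ j : Fin n, if G.Adj i j then Real.log (A i j) - ystar i + ystar j else 0)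
          = 0) ∧
    ((∀ y : Fin n → ℝ, kappaLLS G A ystar ≤ kappaLLS G A y) ↔
      (lap G).mulVec ystar = (Pmat G A).mulVec (fun _ => 1)) :=
  kappa_global_min_iff_general G A hrec ystar
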